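/- arXiv:2206.07029 — 3 statements merged into one kernel-verified Lean document; each statement's English description precedes it below -/
import Mathlib

section
/- Let A and A' be finite abelian groups with functions d: A → ℂ and d': A' → ℂ whose Fourier transforms are nonzero at every nontrivial character. Then the maximal special subgroups of (A × A')^∨ ≅ A^∨ × (A')^∨ with respect to the weight (d ⊕ d')^ are exactly A^∨ × {1} and {1} × (A')^∨ (assuming A and A' are both nontrivial). Here a special subgroup of a weighted group (B, w) is a nontrivial subgroup C ⊆ B with w(c) ≠ 0 for all nontrivial c ∈ C, and maximal means maximal among special subgroups. -/
/-- The Fourier transform of `d : A → ℂ`, with the normalization `1/|A|`. -/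
noncomputable def fourierTransform {A : Type*} [AddCommGroup A] [Fintype A]
    (d : A → ℂ) (φ : AddChar A ℂ) : ℂ :=
  (Fintype.card A : ℂ)⁻¹ * ∑ a : A, d a * (starRingEnd ℂ) (φ a)

/-- A special subgroup of a weighted (multiplicative) group `(B, w)`:
a nontrivial subgroup on whose nontrivial elements `w` is nonzero. -/
def IsSpecial {B : Type*} [CommGroup B] (w : B → ℂ) (C : Subgroup B) : Prop :=
  C ≠ ⊥ ∧ ∀ c ∈ C, c ≠ 1 → w c ≠ 0

/-- A maximal special subgroup: maximal among special subgroups under inclusion. -/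
def IsMaxSpecial {B : Type*} [CommGroup B] (w : B → ℂ) (C : Subgroup B) : Prop :=
  IsSpecial w C ∧ ∀ C' : Subgroup B, IsSpecial w C' → C ≤ C' → C = C'

/-- The subgroup `A^∨ × {1}` of the dual of `A × A'`: characters trivial on `{0} × A'`. -/
def dualFactorLeft (A A' : Type*) [AddCommGroup A] [AddCommGroup A'] :
    Subgroup (AddChar (A × A') ℂ) where
  carrier := {χ | ∀ a' : A', χ (0, a') = 1}
  one_mem' := by intro a'; simp
  mul_mem' := by
    intro χ₁ χ₂ h₁ h₂ a'
    simp only [AddChar.mul_apply, h₁ a', h₂ a', one_mul]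
  inv_mem' := by
    intro χ h a'
    simp only [Set.mem_setOf_eq] at h ⊢
    rw [AddChar.inv_apply', h a', inv_one]

/-- The subgroup `{1} × (A')^∨` of the dual of `A × A'`: characters trivial on `A × {0}`. -/
def dualFactorRight (A A' : Type*) [AddCommGroup A] [AddCommGroup A'] :
    Subgroup (AddChar (A × A') ℂ) where
  carrier := {χ | ∀ a : A, χ (a, 0) = 1}
  one_mem' := by intro a; simp
  mul_mem' := by
    intro χ₁ χ₂ h₁ h₂ a
    simp only [AddChar.mul_apply, h₁ a, h₂ a, one_mul]
  inv_mem' := by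
    intro χ h a
    simp only [Set.mem_setOf_eq] at h ⊢
    rw [AddChar.inv_apply', h a, inv_one]

section Helpers

variable {A A' : Type*} [AddCommGroup A] [Fintype A] [AddCommGroup A'] [Fintype A']

/-- Restriction of a character of `A × A'` to `A`. -/
def resL (χ : AddChar (A × A') ℂ) : AddChar A ℂ :=
  χ.compAddMonoidHom (AddMonoidHom.inl A A')

/-- Restriction of a character of `A × A'` to `A'`. -/
def resR (χ : AddChar (A × A') ℂ) : AddChar A' ℂ :=
  χ.compAddMonoidHom (AddMonoidHom.inr A A')

lemma resL_apply (χ : AddChar (A × A') ℂ) (a : A) : resL χ a = χ (a, 0) := rfl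

lemma resR_apply (χ : AddChar (A × A') ℂ) (a' : A') : resR χ a' = χ (0, a') := rfl

lemma resL_mul (χ₁ χ₂ : AddChar (A × A') ℂ) : resL (χ₁ * χ₂) = resL χ₁ * resL χ₂ := by
  ext a; rfl

lemma resR_mul (χ₁ χ₂ : AddChar (A × A') ℂ) : resR (χ₁ * χ₂) = resR χ₁ * resR χ₂ := by
  ext a; rfl

lemma chi_decomp (χ : AddChar (A × A') ℂ) (a : A) (a' : A') :
    χ (a, a') = χ (a, 0) * χ (0, a') := by
  rw [← AddChar.map_add_eq_mul]
  norm_num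

lemma eq_one_of_res (χ : AddChar (A × A') ℂ) (h1 : resL χ = 1) (h2 : resR χ = 1) :
    χ = 1 := by
  ext p
  obtain ⟨a, a'⟩ := p
  rw [chi_decomp]
  have ha : χ (a, 0) = 1 := by
    have := DFunLike.congr_fun h1 a
    simpa [resL_apply] using this
  have ha' : χ (0, a') = 1 := by
    have := DFunLike.congr_fun h2 a'
    simpa [resR_apply] using this
  simp [ha, ha']

lemma mem_dualFactorLeft_iff (χ : AddChar (A × A') ℂ) :
    χ ∈ dualFactorLeft A A' ↔ resR χ = 1 := by
  constructor
  · intro h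
    ext a'
    simpa [resR_apply] using h a'
  · intro h a'
    have := DFunLike.congr_fun h a'
    simpa [resR_apply] using this

lemma mem_dualFactorRight_iff (χ : AddChar (A × A') ℂ) :
    χ ∈ dualFactorRight A A' ↔ resL χ = 1 := by
  constructor
  · intro h
    ext a
    simpa [resL_apply] using h a
  · intro h a
    have := DFunLike.congr_fun h a
    simpa [resL_apply] using this

lemma sum_conj_char (ψ : AddChar A ℂ) :
    ∑ a, (starRingEnd ℂ) (ψ a) = if ψ = 1 then (Fintype.card A : ℂ) else 0 := by
  classical
  have h : ∀ a : A, (starRingEnd ℂ) (ψ a) = ψ (-a) := fun a =>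
    (AddChar.map_neg_eq_conj ψ a).symm
  simp_rw [h]
  rw [Fintype.sum_equiv (Equiv.neg A) _ (fun a => ψ a) (fun a => by simp)]
  rw [AddChar.sum_eq_ite]
  rfl

lemma ft_prod (d : A → ℂ) (d' : A' → ℂ) (χ : AddChar (A × A') ℂ) :
    fourierTransform (fun p : A × A' => d p.1 + d' p.2) χ =
      (if resR χ = 1 then fourierTransform d (resL χ) else 0)
      + (if resL χ = 1 then fourierTransform d' (resR χ) else 0) := by
  classical
  have hS : ∑ p : A × A', (d p.1 + d' p.2) * (starRingEnd ℂ) (χ p)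
      = (∑ a, d a * (starRingEnd ℂ) (χ (a, 0))) * (∑ a', (starRingEnd ℂ) (χ (0, a')))
        + (∑ a, (starRingEnd ℂ) (χ (a, 0))) * (∑ a', d' a' * (starRingEnd ℂ) (χ (0, a'))) := by
    rw [Finset.sum_mul_sum, Finset.sum_mul_sum, ← Finset.sum_add_distrib]
    rw [Fintype.sum_prod_type]
    refine Finset.sum_congr rfl fun a _ => ?_
    rw [← Finset.sum_add_distrib]
    refine Finset.sum_congr rfl fun a' _ => ?_
    rw [chi_decomp, map_mul]
    ring
  have hcL : ∑ a, (starRingEnd ℂ) (χ (a, 0)) = if resL χ = 1 then (Fintype.card A : ℂ) else 0 := by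
    simpa [resL_apply] using sum_conj_char (resL χ)
  have hcR : ∑ a', (starRingEnd ℂ) (χ (0, a'))
      = if resR χ = 1 then (Fintype.card A' : ℂ) else 0 := by
    simpa [resR_apply] using sum_conj_char (resR χ)
  have hA : (Fintype.card A : ℂ) ≠ 0 := Nat.cast_ne_zero.2 Fintype.card_ne_zero
  have hA' : (Fintype.card A' : ℂ) ≠ 0 := Nat.cast_ne_zero.2 Fintype.card_ne_zero
  unfold fourierTransform
  rw [hS, hcL, hcR, Fintype.card_prod, Nat.cast_mul]
  have hL : ∀ a : A, χ (a, 0) = resL χ a := fun a => rfl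
  have hR : ∀ a' : A', χ (0, a') = resR χ a' := fun a' => rfl
  simp only [hL, hR]
  by_cases h1 : resL χ = 1 <;> by_cases h2 : resR χ = 1 <;>
    simp only [h1, h2, if_true, if_false, AddChar.one_apply, map_one, mul_one,
      mul_zero, zero_mul, add_zero, zero_add] <;>
    field_simp <;> ring

lemma w_formula_zero (d : A → ℂ) (d' : A' → ℂ) (χ : AddChar (A × A') ℂ)
    (hL : resL χ ≠ 1) (hR : resR χ ≠ 1) :
    fourierTransform (fun p : A × A' => d p.1 + d' p.2) χ = 0 := by
  rw [ft_prod]; simp [hL, hR]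

lemma w_formula_left (d : A → ℂ) (d' : A' → ℂ) (χ : AddChar (A × A') ℂ)
    (hR : resR χ = 1) (hL : resL χ ≠ 1) :
    fourierTransform (fun p : A × A' => d p.1 + d' p.2) χ = fourierTransform d (resL χ) := by
  rw [ft_prod]; simp [hL, hR]

lemma w_formula_right (d : A → ℂ) (d' : A' → ℂ) (χ : AddChar (A × A') ℂ)
    (hL : resL χ = 1) (hR : resR χ ≠ 1) :
    fourierTransform (fun p : A × A' => d p.1 + d' p.2) χ = fourierTransform d' (resR χ) := by
  rw [ft_prod]; simp [hL, hR]

lemma exists_left_ne_one [Nontrivial A] :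
    ∃ χ : AddChar (A × A') ℂ, χ ∈ dualFactorLeft A A' ∧ χ ≠ 1 := by
  obtain ⟨a, ha⟩ := exists_ne (0 : A)
  obtain ⟨ψ, hψ⟩ := AddChar.exists_apply_ne_zero.2 ha
  refine ⟨ψ.compAddMonoidHom (AddMonoidHom.fst A A'), fun a' => by simp, ?_⟩
  rw [AddChar.ne_one_iff]
  exact ⟨(a, 0), by simpa using hψ⟩

lemma exists_right_ne_one [Nontrivial A'] :
    ∃ χ : AddChar (A × A') ℂ, χ ∈ dualFactorRight A A' ∧ χ ≠ 1 := by
  obtain ⟨a, ha⟩ := exists_ne (0 : A')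
  obtain ⟨ψ, hψ⟩ := AddChar.exists_apply_ne_zero.2 ha
  refine ⟨ψ.compAddMonoidHom (AddMonoidHom.snd A A'), fun a' => by simp, ?_⟩
  rw [AddChar.ne_one_iff]
  exact ⟨(0, a), by simpa using hψ⟩

end Helpers

/-- If `d` and `d'` have Fourier transforms nonvanishing at all nontrivial characters and
`A`, `A'` are nontrivial, the maximal special subgroups of the dual of `A × A'` weighted by
the Fourier transform of `d ⊕ d'` are exactly `A^∨ × {1}` and `{1} × (A')^∨`. -/
theorem maxSpecial_of_directSum {A A' : Type*}
    [AddCommGroup A] [Fintype A] [Nontrivial A]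
    [AddCommGroup A'] [Fintype A'] [Nontrivial A']
    (d : A → ℂ) (d' : A' → ℂ)
    (hd : ∀ φ : AddChar A ℂ, φ ≠ 1 → fourierTransform d φ ≠ 0)
    (hd' : ∀ ψ : AddChar A' ℂ, ψ ≠ 1 → fourierTransform d' ψ ≠ 0) :
    ∀ C : Subgroup (AddChar (A × A') ℂ),
      IsMaxSpecial (fourierTransform (fun p : A × A' => d p.1 + d' p.2)) C ↔
        C = dualFactorLeft A A' ∨ C = dualFactorRight A A' := by
  set w := fourierTransform (fun p : A × A' => d p.1 + d' p.2) with hw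
  -- specialness of the two factors
  have hLspec : IsSpecial w (dualFactorLeft A A') := by
    obtain ⟨χ₀, hχ₀mem, hχ₀ne⟩ := exists_left_ne_one (A := A) (A' := A')
    constructor
    · intro hbot
      rw [hbot, Subgroup.mem_bot] at hχ₀mem
      exact hχ₀ne hχ₀mem
    · intro χ hmem hne
      rw [mem_dualFactorLeft_iff] at hmem
      have hL : resL χ ≠ 1 := fun h => hne (eq_one_of_res χ h hmem)
      rw [hw, w_formula_left d d' χ hmem hL]
      exact hd _ hL
  have hRspec : IsSpecial w (dualFactorRight A A') := by
    obtain ⟨χ₀, hχ₀mem, hχ₀ne⟩ := exists_right_ne_one (A := A) (A' := A')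
    constructor
    · intro hbot
      rw [hbot, Subgroup.mem_bot] at hχ₀mem
      exact hχ₀ne hχ₀mem
    · intro χ hmem hne
      rw [mem_dualFactorRight_iff] at hmem
      have hR : resR χ ≠ 1 := fun h => hne (eq_one_of_res χ hmem h)
      rw [hw, w_formula_right d d' χ hmem hR]
      exact hd' _ hR
  -- no special subgroup contains an element with both restrictions nontrivial
  have hno : ∀ C : Subgroup (AddChar (A × A') ℂ), IsSpecial w C →
      ∀ χ ∈ C, resL χ ≠ 1 → resR χ ≠ 1 → False := by
    intro C hC χ hmem hL hR
    have hne : χ ≠ 1 := fun h => hL (by rw [h]; ext a; rfl)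
    exact hC.2 χ hmem hne (by rw [hw, w_formula_zero d d' χ hL hR])
  -- maximality of dualFactorLeft
  have hLmax : IsMaxSpecial w (dualFactorLeft A A') := by
    refine ⟨hLspec, fun C' hC' hle => le_antisymm hle ?_⟩
    intro χ hmem
    rw [mem_dualFactorLeft_iff]
    by_contra hR
    obtain ⟨χ₀, hχ₀mem, hχ₀ne⟩ := exists_left_ne_one (A := A) (A' := A')
    have hχ₀L : resL χ₀ ≠ 1 := fun h =>
      hχ₀ne (eq_one_of_res χ₀ h ((mem_dualFactorLeft_iff χ₀).1 hχ₀mem))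
    by_cases hL : resL χ = 1
    · -- use the product χ * χ₀
      have hmem' : χ * χ₀ ∈ C' := C'.mul_mem hmem (hle hχ₀mem)
      refine hno C' hC' _ hmem' ?_ ?_
      · rw [resL_mul, hL, one_mul]; exact hχ₀L
      · rw [resR_mul, (mem_dualFactorLeft_iff χ₀).1 hχ₀mem, mul_one]; exact hR
    · exact hno C' hC' χ hmem hL hR
  -- maximality of dualFactorRight
  have hRmax : IsMaxSpecial w (dualFactorRight A A') := by
    refine ⟨hRspec, fun C' hC' hle => le_antisymm hle ?_⟩
    intro χ hmem
    rw [mem_dualFactorRight_iff]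
    by_contra hL
    obtain ⟨χ₀, hχ₀mem, hχ₀ne⟩ := exists_right_ne_one (A := A) (A' := A')
    have hχ₀R : resR χ₀ ≠ 1 := fun h =>
      hχ₀ne (eq_one_of_res χ₀ ((mem_dualFactorRight_iff χ₀).1 hχ₀mem) h)
    by_cases hR : resR χ = 1
    · have hmem' : χ * χ₀ ∈ C' := C'.mul_mem hmem (hle hχ₀mem)
      refine hno C' hC' _ hmem' ?_ ?_
      · rw [resL_mul, (mem_dualFactorRight_iff χ₀).1 hχ₀mem, mul_one]; exact hL
      · rw [resR_mul, hR, one_mul]; exact hχ₀R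
    · exact hno C' hC' χ hmem hL hR
  intro C
  constructor
  · rintro ⟨hCspec, hCmax⟩
    -- C is contained in one of the two factors
    have hsub : C ≤ dualFactorLeft A A' ∨ C ≤ dualFactorRight A A' := by
      by_contra hcon
      push_neg at hcon
      obtain ⟨hnl, hnr⟩ := hcon
      obtain ⟨χ₁, hχ₁mem, hχ₁⟩ := SetLike.not_le_iff_exists.1 hnl
      obtain ⟨χ₂, hχ₂mem, hχ₂⟩ := SetLike.not_le_iff_exists.1 hnr
      rw [mem_dualFactorLeft_iff] at hχ₁
      rw [mem_dualFactorRight_iff] at hχ₂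
      have hχ₁L : resL χ₁ = 1 := by
        by_contra h
        exact hno C hCspec χ₁ hχ₁mem h hχ₁
      have hχ₂R : resR χ₂ = 1 := by
        by_contra h
        exact hno C hCspec χ₂ hχ₂mem hχ₂ h
      refine hno C hCspec (χ₁ * χ₂) (C.mul_mem hχ₁mem hχ₂mem) ?_ ?_
      · rw [resL_mul, hχ₁L, one_mul]; exact hχ₂
      · rw [resR_mul, hχ₂R, mul_one]; exact hχ₁
    rcases hsub with h | h
    · exact Or.inl (hCmax _ hLspec h)
    · exact Or.inr (hCmax _ hRspec h)
  · rintro (rfl | rfl)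
    · exact hLmax
    · exact hRmax
end

section
/- Suppose (A_1, d_1), …, (A_n, d_n) and (A'_1, d'_1), …, (A'_m, d'_m) are finite abelian groups with complex-valued weights whose Fourier transforms are nonzero at every nontrivial character, and suppose all A_i and A'_j are nontrivial. Let (A, d) and (A', d') be the direct sums (with d(a_1,…,a_n) = ∑ d_i(a_i)). If there is a group isomorphism φ: A → A' and an element a' ∈ A' with d'(φ(a) + a') = d(a) for all a ∈ A, then n = m and φ preserves the direct sum decompositions: for each i there is some j with φ(A_i) = A'_j (viewing A_i as the i-th coordinate subgroup). -/
open Finset Function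

namespace AddChar

section Precomposition

variable {A B M : Type*} [AddCommGroup A] [AddCommGroup B] [CommMonoid M]

def compAddMonoidHomHom (f : A →+ B) : AddChar B M →* AddChar A M where
  toFun ψ := ψ.compAddMonoidHom f
  map_one' := rfl
  map_mul' _ _ := rfl

@[simp]
lemma compAddMonoidHomHom_apply (f : A →+ B) (ψ : AddChar B M) :
    compAddMonoidHomHom f ψ = ψ.compAddMonoidHom f :=
  rfl

def compAddEquiv (e : A ≃+ B) : AddChar B M ≃* AddChar A M where
  toFun ψ := ψ.compAddMonoidHom e
  invFun ψ := ψ.compAddMonoidHom e.symm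
  left_inv ψ := by ext; simp
  right_inv ψ := by ext; simp
  map_mul' _ _ := rfl

@[simp]
lemma compAddEquiv_apply (e : A ≃+ B) (ψ : AddChar B M) (a : A) :
    compAddEquiv e ψ a = ψ (e a) :=
  rfl

end Precomposition

section Pi

variable {ι M : Type*} [CommMonoid M] {B : ι → Type*} [∀ i, AddCommGroup (B i)]

variable (M B) in
def piCoordSubgroup (i : ι) : Subgroup (AddChar (∀ i, B i) M) :=
  (compAddMonoidHomHom (Pi.evalAddMonoidHom B i)).range

lemma map_pi_eq_prod [Fintype ι] [DecidableEq ι] (χ : AddChar (∀ i, B i) M) (a : ∀ i, B i) :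
    χ a = ∏ i, χ (Pi.single i (a i)) := by
  conv_lhs => rw [← univ_sum_single a]
  exact map_sum χ.toAddMonoidHom _ _

lemma mem_piCoordSubgroup_iff [Fintype ι] [DecidableEq ι] {χ : AddChar (∀ i, B i) M} {i : ι} :
    χ ∈ piCoordSubgroup M B i ↔ ∀ k ≠ i, ∀ y : B k, χ (Pi.single k y) = 1 := by
  constructor
  · rintro ⟨ψ, rfl⟩ k hk y
    simp [Pi.single_eq_of_ne' hk]
  · refine fun h => ⟨χ.compAddMonoidHom (AddMonoidHom.single B i), DFunLike.ext _ _ fun a => ?_⟩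
    rw [map_pi_eq_prod χ a, prod_eq_single i (fun k _ hk => h k hk _) (by simp)]
    rfl

lemma iSupIndep_piCoordSubgroup [Fintype ι] [DecidableEq ι] :
    iSupIndep (piCoordSubgroup M B) := by
  intro i
  have hle : ⨆ k ≠ i, piCoordSubgroup M B k ≤
      (compAddMonoidHomHom (M := M) (AddMonoidHom.single B i)).ker :=
    iSup₂_le fun k hk χ hχ => DFunLike.ext _ _ (mem_piCoordSubgroup_iff.1 hχ i (Ne.symm hk))
  refine Disjoint.mono_right hle (Subgroup.disjoint_def.2 fun {χ} hχi hχker => ?_)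
  ext a
  rw [map_pi_eq_prod, one_apply]
  refine prod_eq_one fun k _ => ?_
  obtain rfl | hk := eq_or_ne k i
  · exact DFunLike.congr_fun hχker (a k)
  · exact mem_piCoordSubgroup_iff.1 hχi k hk _

lemma disjoint_piCoordSubgroup [Fintype ι] [DecidableEq ι] {i k : ι} (h : i ≠ k) :
    Disjoint (piCoordSubgroup M B i) (piCoordSubgroup M B k) :=
  iSupIndep_piCoordSubgroup.pairwiseDisjoint h

lemma piCoordSubgroup_ne_bot (i : ι) [Finite (B i)] [Nontrivial (B i)] :
    piCoordSubgroup ℂ B i ≠ ⊥ := by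
  classical
  obtain ⟨x, hx⟩ := exists_ne (0 : B i)
  obtain ⟨ψ, hψ⟩ := exists_apply_ne_zero.2 hx
  intro h
  have hmem : ψ.compAddMonoidHom (Pi.evalAddMonoidHom B i) ∈ piCoordSubgroup ℂ B i := ⟨ψ, rfl⟩
  rw [h, Subgroup.mem_bot] at hmem
  exact hψ (by simpa using DFunLike.congr_fun hmem (Pi.single i x))

end Pi

end AddChar

open AddChar

namespace Subgroup

variable {G ι κ : Type*} [Group G]

theorem exists_le_of_iSupIndep {H : ι → Subgroup G} (hH : iSupIndep H) {K : Subgroup G}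
    (hK : K ≠ ⊥) (hKH : ∀ g ∈ K, g ≠ 1 → ∃ i, g ∈ H i) : ∃ i, K ≤ H i := by
  obtain ⟨⟨g, hgK⟩, hg⟩ := ne_bot_iff_exists_ne_one.1 hK
  replace hg : g ≠ 1 := fun h => hg (Subtype.ext h)
  obtain ⟨i, hgi⟩ := hKH g hgK hg
  refine ⟨i, fun x hxK => ?_⟩
  by_contra hxi
  obtain ⟨l, hxl⟩ := hKH x hxK fun h => hxi (h ▸ one_mem _)
  have hli : l ≠ i := by rintro rfl; exact hxi hxl
  obtain ⟨p, hp⟩ : ∃ p, g * x⁻¹ ∈ H p := by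
    by_cases h : g * x⁻¹ = 1
    · exact ⟨l, h ▸ one_mem _⟩
    · exact hKH _ (mul_mem hgK (inv_mem hxK)) h
  obtain rfl | hpi := eq_or_ne p i
  · exact hxi (by simpa using mul_mem (inv_mem hp) hgi)
  · refine hg (disjoint_def.1 (hH i) hgi ?_)
    have hsub : ∀ k ≠ i, H k ≤ ⨆ j ≠ i, H j := fun k hk =>
      le_iSup₂ (f := fun j (_ : j ≠ i) => H j) k hk
    simpa using mul_mem (hsub p hpi hp) (hsub l hli hxl)

theorem range_subset_range_of_iSupIndep {H : ι → Subgroup G} {K : κ → Subgroup G}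
    (hH : iSupIndep H) (hK : iSupIndep K) (hH₀ : ∀ i, H i ≠ ⊥) (hK₀ : ∀ j, K j ≠ ⊥)
    (hHK : ∀ g ≠ (1 : G), (∃ i, g ∈ H i) ↔ ∃ j, g ∈ K j) : Set.range K ⊆ Set.range H := by
  rintro _ ⟨j, rfl⟩
  obtain ⟨i, hji⟩ := exists_le_of_iSupIndep hH (hK₀ j) fun g hg hg1 => (hHK g hg1).2 ⟨j, hg⟩
  obtain ⟨j', hij'⟩ := exists_le_of_iSupIndep hK (hH₀ i) fun g hg hg1 => (hHK g hg1).1 ⟨i, hg⟩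
  obtain rfl : j = j' := by
    by_contra hne
    exact hK₀ j ((hK.pairwiseDisjoint hne).eq_bot_of_le (hji.trans hij'))
  exact ⟨i, le_antisymm hij' hji⟩

theorem exists_equiv_of_iSupIndep {H : ι → Subgroup G} {K : κ → Subgroup G}
    (hH : iSupIndep H) (hK : iSupIndep K) (hH₀ : ∀ i, H i ≠ ⊥) (hK₀ : ∀ j, K j ≠ ⊥)
    (hHK : ∀ g ≠ (1 : G), (∃ i, g ∈ H i) ↔ ∃ j, g ∈ K j) : ∃ σ : ι ≃ κ, ∀ i, K (σ i) = H i := by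
  have hrange : Set.range H = Set.range K :=
    (range_subset_range_of_iSupIndep hK hH hK₀ hH₀ fun g hg => (hHK g hg).symm).antisymm
      (range_subset_range_of_iSupIndep hH hK hH₀ hK₀ hHK)
  refine ⟨(Equiv.ofInjective H (hH.injective hH₀)).trans
    ((Equiv.setCongr hrange).trans (Equiv.ofInjective K (hK.injective hK₀)).symm), fun i => ?_⟩
  simp [Equiv.apply_ofInjective_symm]

end Subgroup

lemma AddMonoidHom.sum_comp_of_surjective {G H M : Type*} [AddGroup G] [Fintype G] [AddMonoid H]
    [Fintype H] [DecidableEq H] [AddCommMonoid M] (π : G →+ H) (hπ : Surjective π) (F : H → M) :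
    ∑ g, F (π g) = #{g | π g = 0} • ∑ h, F h := by
  rw [sum_comp, image_univ_of_surjective hπ, smul_sum]
  exact sum_congr rfl fun h _ => by
    rw [AddMonoidHom.card_fiber_eq_of_mem_range π (hπ h) ⟨0, map_zero π⟩]

section Fourier

variable {G H : Type*} [AddCommGroup G] [Fintype G] [AddCommGroup H] [Fintype H]

lemma fourierTransform_sum {κ : Type*} (s : Finset κ) (f : κ → G → ℂ) (χ : AddChar G ℂ) :
    fourierTransform (fun x => ∑ k ∈ s, f k x) χ = ∑ k ∈ s, fourierTransform (f k) χ := by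
  simp only [fourierTransform, sum_mul, mul_sum]
  exact sum_comm

lemma fourierTransform_comp_add_right (f : G → ℂ) (y : G) (χ : AddChar G ℂ) :
    fourierTransform (fun x => f (x + y)) χ = χ y * fourierTransform f χ := by
  unfold fourierTransform
  rw [mul_left_comm (χ y)]
  congr 1
  rw [mul_sum, ← (Equiv.subRight y).sum_comp]
  refine Fintype.sum_congr _ _ fun x => ?_
  simp only [Equiv.subRight_apply, sub_add_cancel]
  rw [sub_eq_add_neg, AddChar.map_add_eq_mul, map_mul, AddChar.map_neg_eq_conj, Complex.conj_conj]
  ring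

lemma fourierTransform_eq_zero_of_add_eq {f : G → ℂ} {y : G} (hf : ∀ x, f (x + y) = f x)
    {χ : AddChar G ℂ} (hχ : χ y ≠ 1) : fourierTransform f χ = 0 := by
  by_contra hne
  have h := fourierTransform_comp_add_right f y χ
  simp only [hf] at h
  exact hχ ((mul_eq_right₀ hne).1 h.symm)

lemma fourierTransform_comp_surjective (π : G →+ H) (hπ : Surjective π) (f : H → ℂ)
    (ψ : AddChar H ℂ) : fourierTransform (f ∘ π) (ψ.compAddMonoidHom π) = fourierTransform f ψ := by
  classical
  have hcard : Fintype.card G = #{g | π g = 0} * Fintype.card H := by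
    simpa using π.sum_comp_of_surjective hπ fun _ => (1 : ℕ)
  have hfiber : (#{g | π g = 0} : ℂ) ≠ 0 := Nat.cast_ne_zero.2 (card_ne_zero.2 ⟨0, by simp⟩)
  simp only [fourierTransform, comp_apply, AddChar.compAddMonoidHom_apply]
  rw [hcard, π.sum_comp_of_surjective hπ fun h => f h * starRingEnd ℂ (ψ h), nsmul_eq_mul]
  push_cast
  field_simp

end Fourier

section PiFourier

variable {ι : Type*} [Fintype ι] [DecidableEq ι] {B : ι → Type*} [∀ i, AddCommGroup (B i)]
  [∀ i, Fintype (B i)]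

lemma fourierTransform_comp_eval {i : ι} (f : B i → ℂ) (ψ : AddChar (B i) ℂ) :
    fourierTransform (fun a => f (a i)) (ψ.compAddMonoidHom (Pi.evalAddMonoidHom B i)) =
      fourierTransform f ψ :=
  fourierTransform_comp_surjective (Pi.evalAddMonoidHom B i)
    (fun x => ⟨Pi.single i x, Pi.single_eq_same i x⟩) f ψ

lemma fourierTransform_comp_eval_of_notMem {i : ι} (f : B i → ℂ) {χ : AddChar (∀ i, B i) ℂ}
    (hχ : χ ∉ piCoordSubgroup ℂ B i) : fourierTransform (fun a => f (a i)) χ = 0 := by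
  obtain ⟨k, hki, y, hy⟩ : ∃ k ≠ i, ∃ y : B k, χ (Pi.single k y) ≠ 1 := by
    simpa [mem_piCoordSubgroup_iff] using hχ
  exact fourierTransform_eq_zero_of_add_eq (fun a => by simp [Pi.single_eq_of_ne' hki]) hy

lemma fourierTransform_sum_comp_eval_ne_zero_iff (d : ∀ i, B i → ℂ)
    (hd : ∀ i, ∀ ψ : AddChar (B i) ℂ, ψ ≠ 1 → fourierTransform (d i) ψ ≠ 0)
    {χ : AddChar (∀ i, B i) ℂ} (hχ : χ ≠ 1) :
    fourierTransform (fun a => ∑ i, d i (a i)) χ ≠ 0 ↔ ∃ i, χ ∈ piCoordSubgroup ℂ B i := by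
  rw [fourierTransform_sum]
  constructor
  · contrapose!
    exact fun h => sum_eq_zero fun i _ => fourierTransform_comp_eval_of_notMem _ (h i)
  · rintro ⟨i, hi⟩
    have hnotMem : ∀ k ≠ i, χ ∉ piCoordSubgroup ℂ B k := fun k hk hk' =>
      hχ (Subgroup.disjoint_def.1 (disjoint_piCoordSubgroup hk) hk' hi)
    rw [sum_eq_single i (fun k _ hk => fourierTransform_comp_eval_of_notMem _ (hnotMem k hk))
      (by simp)]
    obtain ⟨ψ, rfl⟩ := hi
    have hψ : ψ ≠ 1 := by rintro rfl; exact hχ (map_one _)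
    rw [compAddMonoidHomHom_apply, fourierTransform_comp_eval]
    exact hd i ψ hψ

end PiFourier

lemma fourierTransform_comp_addEquiv_add {G G' : Type*} [AddCommGroup G] [Fintype G]
    [AddCommGroup G'] [Fintype G'] (φ : G ≃+ G') (a' : G') (f' : G' → ℂ) (χ' : AddChar G' ℂ) :
    fourierTransform (fun a => f' (φ a + a')) (AddChar.compAddEquiv φ χ') =
      χ' a' * fourierTransform f' χ' :=
  (fourierTransform_comp_surjective φ.toAddMonoidHom φ.surjective (fun x => f' (x + a')) χ').trans
    (fourierTransform_comp_add_right f' a' χ')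

section AffineIso

variable {ι κ : Type*} [Fintype ι] [DecidableEq ι] [Fintype κ] [DecidableEq κ]
  {A : ι → Type*} [∀ i, AddCommGroup (A i)] [∀ i, Fintype (A i)]
  {A' : κ → Type*} [∀ j, AddCommGroup (A' j)] [∀ j, Fintype (A' j)]

lemma exists_mem_piCoordSubgroup_compAddEquiv_iff (d : ∀ i, A i → ℂ) (d' : ∀ j, A' j → ℂ)
    (hd : ∀ i, ∀ χ : AddChar (A i) ℂ, χ ≠ 1 → fourierTransform (d i) χ ≠ 0)
    (hd' : ∀ j, ∀ χ : AddChar (A' j) ℂ, χ ≠ 1 → fourierTransform (d' j) χ ≠ 0)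
    (φ : (∀ i, A i) ≃+ (∀ j, A' j)) (a' : ∀ j, A' j)
    (hφ : ∀ a : ∀ i, A i, (∑ j, d' j (φ a j + a' j)) = ∑ i, d i (a i))
    {χ' : AddChar (∀ j, A' j) ℂ} (hχ' : χ' ≠ 1) :
    (∃ i, compAddEquiv φ χ' ∈ piCoordSubgroup ℂ A i) ↔ ∃ j, χ' ∈ piCoordSubgroup ℂ A' j := by
  have hχ : compAddEquiv φ χ' ≠ 1 := (map_ne_one_iff _ (compAddEquiv φ).injective).2 hχ'
  have hd_eq : (fun a => ∑ i, d i (a i)) = fun a => (fun x => ∑ j, d' j (x j)) (φ a + a') :=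
    funext fun a => (hφ a).symm
  rw [← fourierTransform_sum_comp_eval_ne_zero_iff d hd hχ,
    ← fourierTransform_sum_comp_eval_ne_zero_iff d' hd' hχ', hd_eq,
    fourierTransform_comp_addEquiv_add φ a' fun x => ∑ j, d' j (x j),
    mul_ne_zero_iff_left (χ'.val_isUnit a').ne_zero]

end AffineIso

section CoordinateSubgroups

variable {ι κ : Type*} [Fintype ι] [DecidableEq ι] [Fintype κ] [DecidableEq κ]
  {A : ι → Type*} [∀ i, AddCommGroup (A i)] [∀ i, Finite (A i)]
  {A' : κ → Type*} [∀ j, AddCommGroup (A' j)] [∀ j, Finite (A' j)]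

lemma mem_range_single_iff_forall_addChar {i : ι} {a : ∀ i, A i} :
    a ∈ (AddMonoidHom.single A i).range ↔ ∀ χ : AddChar (∀ i, A i) ℂ,
      (∃ k, χ ∈ piCoordSubgroup ℂ A k) → χ ∉ piCoordSubgroup ℂ A i → χ a = 1 := by
  constructor
  · rintro ⟨x, rfl⟩ χ ⟨k, hk⟩ hi
    exact mem_piCoordSubgroup_iff.1 hk i (fun h => hi (h ▸ hk)) x
  · refine fun h => ⟨a i, funext fun k => ?_⟩
    obtain rfl | hki := eq_or_ne k i
    · simp
    by_contra hak
    have hak' : a k ≠ 0 := fun h => hak (by simp [Pi.single_eq_of_ne hki, h])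
    obtain ⟨ψ, hψ⟩ := exists_apply_ne_zero.2 hak'
    have hk : ψ.compAddMonoidHom (Pi.evalAddMonoidHom A k) ∈ piCoordSubgroup ℂ A k := ⟨ψ, rfl⟩
    refine hψ (h _ ⟨k, hk⟩ fun hi => hψ ?_)
    simpa using DFunLike.congr_fun (Subgroup.disjoint_def.1 (disjoint_piCoordSubgroup hki) hk hi) a

lemma map_range_single_eq_range_single (φ : (∀ i, A i) ≃+ (∀ j, A' j))
    (hU : ∀ χ' ≠ (1 : AddChar (∀ j, A' j) ℂ),
      (∃ i, compAddEquiv φ χ' ∈ piCoordSubgroup ℂ A i) ↔ ∃ j, χ' ∈ piCoordSubgroup ℂ A' j)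
    {i : ι} {j : κ}
    (hij : (piCoordSubgroup ℂ A' j).map (compAddEquiv φ).toMonoidHom = piCoordSubgroup ℂ A i) :
    (AddMonoidHom.single A i).range.map φ.toAddMonoidHom = (AddMonoidHom.single A' j).range := by
  ext x'
  rw [AddSubgroup.mem_map_equiv, mem_range_single_iff_forall_addChar,
    mem_range_single_iff_forall_addChar, (compAddEquiv φ).surjective.forall]
  refine forall_congr' fun χ' => ?_
  rw [← hij, compAddEquiv_apply, φ.apply_symm_apply,
    Subgroup.mem_map_equiv, MulEquiv.symm_apply_apply]
  by_cases hχ' : χ' = 1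
  · simp [hχ']
  · rw [hU χ' hχ']

end CoordinateSubgroups

/-- If `(A_i, d_i)` and `(A'_j, d'_j)` are nontrivial finite abelian weighted groups whose
Fourier transforms are nonzero at every nontrivial character, then any affine isomorphism
between the direct sums `(A, d)` and `(A', d')` forces `n = m` and sends each coordinate
subgroup `A_i` onto some coordinate subgroup `A'_j`. -/
theorem affineIso_directSum_preserves_decomposition
    {n m : ℕ} (A : Fin n → Type*) (A' : Fin m → Type*)
    [∀ i, AddCommGroup (A i)] [∀ i, Fintype (A i)] [∀ i, Nontrivial (A i)]
    [∀ j, AddCommGroup (A' j)] [∀ j, Fintype (A' j)] [∀ j, Nontrivial (A' j)]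
    (d : ∀ i, A i → ℂ) (d' : ∀ j, A' j → ℂ)
    (hd : ∀ i, ∀ χ : AddChar (A i) ℂ, χ ≠ 1 → fourierTransform (d i) χ ≠ 0)
    (hd' : ∀ j, ∀ χ : AddChar (A' j) ℂ, χ ≠ 1 → fourierTransform (d' j) χ ≠ 0)
    (φ : (∀ i, A i) ≃+ (∀ j, A' j)) (a' : ∀ j, A' j)
    (hφ : ∀ a : ∀ i, A i, (∑ j, d' j (φ a j + a' j)) = ∑ i, d i (a i)) :
    n = m ∧ ∀ i : Fin n, ∃ j : Fin m,
      AddSubgroup.map φ.toAddMonoidHom (AddMonoidHom.single A i).range =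
        (AddMonoidHom.single A' j).range := by
  set e : AddChar (∀ j, A' j) ℂ ≃* AddChar (∀ i, A i) ℂ := compAddEquiv φ
  have hU : ∀ χ' ≠ (1 : AddChar (∀ j, A' j) ℂ),
      (∃ i, e χ' ∈ piCoordSubgroup ℂ A i) ↔ ∃ j, χ' ∈ piCoordSubgroup ℂ A' j :=
    fun χ' hχ' => exists_mem_piCoordSubgroup_compAddEquiv_iff d d' hd hd' φ a' hφ hχ'
  obtain ⟨σ, hσ⟩ := Subgroup.exists_equiv_of_iSupIndep iSupIndep_piCoordSubgroup
    (iSupIndep_piCoordSubgroup.map_orderIso e.mapSubgroup) (fun i => piCoordSubgroup_ne_bot i)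
    (fun j => (Subgroup.map_eq_bot_iff_of_injective _ e.injective).not.2 (piCoordSubgroup_ne_bot j))
    fun χ hχ => by
      simpa only [comp_apply, MulEquiv.coe_mapSubgroup, Subgroup.mem_map_equiv,
        e.apply_symm_apply] using hU (e.symm χ) (e.symm.map_ne_one_iff.2 hχ)
  exact ⟨by simpa using Fintype.card_congr σ,
    fun i => ⟨σ i, map_range_single_eq_range_single φ hU (hσ i)⟩⟩
end

section
/- For coprime positive integers p and q, define f_{p,q}: ℤ/p → ℂ by f_{p,q}(i) being the coefficient function of the Laurent expansion of (1−ζ)(1−ζ^q) as a sum of characters; concretely f_{p,q}(0) counts +1, f_{p,q}(1) and f_{p,q}(q) count −1 each, and f_{p,q}(q+1) counts +1 (values added when indices coincide mod p), and all other values are 0. Suppose p > 2, 1 < q < p−1, 1 < s < p−1 with q, s coprime to p, and suppose there exist k coprime to p and ℓ ∈ ℤ/p such that f_{p,s}(k·i + ℓ) = f_{p,q}(i) for all i ∈ ℤ/p. Then s ≡ q (mod p) or q·s ≡ 1 (mod p). -/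
/-- The function `f_{p,q} : ℤ/p → ℂ`, `f_{p,q}(i) = [i=0] − [i=1] − [i=q] + [i=q+1]`
(Iverson brackets on residues mod `p`; coinciding indices add). -/
noncomputable def lensCoeff (p q : ℕ) (i : ZMod p) : ℂ :=
  (if i = 0 then 1 else 0) - (if i = 1 then 1 else 0)
    - (if i = (q : ZMod p) then 1 else 0) + (if i = (q : ZMod p) + 1 then 1 else 0)

lemma lensCoeff_one_cases {p s : ℕ} {x : ZMod p} (h01 : (0:ZMod p) ≠ 1)
    (hs0 : (s:ZMod p) ≠ 0) (hs1 : (s:ZMod p) ≠ 1)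
    (ht0 : (s:ZMod p)+1 ≠ 0) (ht1 : (s:ZMod p)+1 ≠ 1)
    (h : lensCoeff p s x = 1) : x = 0 ∨ x = (s:ZMod p)+1 := by
  unfold lensCoeff at h
  split_ifs at h <;> simp_all <;> norm_num at h

lemma lensCoeff_negone_cases {p s : ℕ} {x : ZMod p} (h01 : (0:ZMod p) ≠ 1)
    (hs0 : (s:ZMod p) ≠ 0) (hs1 : (s:ZMod p) ≠ 1)
    (ht0 : (s:ZMod p)+1 ≠ 0) (ht1 : (s:ZMod p)+1 ≠ 1)
    (h : lensCoeff p s x = -1) : x = 1 ∨ x = (s:ZMod p) := by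
  unfold lensCoeff at h
  split_ifs at h <;> simp_all <;> norm_num at h

/-- If `p > 2`, `1 < q < p−1`, `1 < s < p−1` with `q, s` coprime to `p`, and some affine
bijection `i ↦ k·i + ℓ` of `ℤ/p` carries `f_{p,q}` to `f_{p,s}`, then `s ≡ q (mod p)` or
`q·s ≡ 1 (mod p)`. -/
theorem lensCoeff_affine_equiv (p q s : ℕ) (hp : 2 < p)
    (hq1 : 1 < q) (hq2 : q < p - 1) (hs1 : 1 < s) (hs2 : s < p - 1)
    (hqp : Nat.Coprime q p) (hsp : Nat.Coprime s p)
    (k : ℕ) (hk : Nat.Coprime k p) (ℓ : ZMod p)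
    (h : ∀ i : ZMod p, lensCoeff p s ((k : ZMod p) * i + ℓ) = lensCoeff p q i) :
    (s : ZMod p) = (q : ZMod p) ∨ ((q : ZMod p) * (s : ZMod p) = 1) := by
  haveI : NeZero p := ⟨by omega⟩
  have hcast : ∀ a b : ℕ, a < p → b < p → ((a : ZMod p) = (b : ZMod p) ↔ a = b) := by
    intro a b ha hb
    rw [ZMod.natCast_eq_natCast_iff, Nat.ModEq, Nat.mod_eq_of_lt ha, Nat.mod_eq_of_lt hb]
  have h01 : (0 : ZMod p) ≠ 1 := by
    intro hh
    have := (hcast 0 1 (by omega) (by omega)).mp (by push_cast; exact hh)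
    omega
  have key : ∀ t : ℕ, 1 < t → t < p - 1 →
      ((t:ZMod p) ≠ 0 ∧ (t:ZMod p) ≠ 1 ∧ (t:ZMod p)+1 ≠ 0 ∧ (t:ZMod p)+1 ≠ 1) := by
    intro t h1 h2
    refine ⟨?_, ?_, ?_, ?_⟩
    · intro hh
      have := (hcast t 0 (by omega) (by omega)).mp (by push_cast; exact hh); omega
    · intro hh
      have := (hcast t 1 (by omega) (by omega)).mp (by push_cast; exact hh); omega
    · intro hh
      have := (hcast (t+1) 0 (by omega) (by omega)).mp (by push_cast; exact hh); omega
    · intro hh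
      have := (hcast (t+1) 1 (by omega) (by omega)).mp (by push_cast; exact hh); omega
  obtain ⟨hq0', hq1', hqt0, hqt1⟩ := key q hq1 hq2
  obtain ⟨hs0', hs1', hst0, hst1⟩ := key s hs1 hs2
  have hku : IsUnit (k : ZMod p) := (ZMod.isUnit_iff_coprime k p).mpr hk
  have hsu : IsUnit (s : ZMod p) := (ZMod.isUnit_iff_coprime s p).mpr hsp
  -- evaluate h at 0, 1, q
  have e0 : lensCoeff p s ℓ = 1 := by
    have := h 0
    rw [mul_zero, zero_add] at this
    rw [this]
    simp [lensCoeff, h01, hq0'.symm, hqt0.symm]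
  have e1 : lensCoeff p s ((k:ZMod p) + ℓ) = -1 := by
    have := h 1
    rw [mul_one] at this
    rw [this]
    simp [lensCoeff, h01.symm, hq1'.symm, hqt1.symm]
    try norm_num
  have eq' : lensCoeff p s ((k:ZMod p) * (q:ZMod p) + ℓ) = -1 := by
    have := h (q : ZMod p)
    rw [this]
    have hq_ne_q1 : (q:ZMod p) ≠ (q:ZMod p) + 1 := by
      intro hh; exact h01 (by linear_combination hh)
    simp [lensCoeff, hq0', hq1', hq_ne_q1]
    try norm_num
  have memL := lensCoeff_one_cases h01 hs0' hs1' hst0 hst1 e0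
  have mem1 := lensCoeff_negone_cases h01 hs0' hs1' hst0 hst1 e1
  have memq := lensCoeff_negone_cases h01 hs0' hs1' hst0 hst1 eq'
  rcases memL with hl | hl <;> rcases mem1 with h1' | h1' <;> rcases memq with hq' | hq' <;>
      subst hl
  · -- ℓ=0, k=1, kq=1 ⇒ q=1
    exfalso
    rw [add_zero] at h1' hq'
    rw [h1', one_mul] at hq'
    exact hq1' hq'
  · -- ℓ=0, k=1, kq=s ⇒ q=s
    left
    rw [add_zero] at h1' hq'
    rw [h1', one_mul] at hq'
    exact hq'.symm
  · -- ℓ=0, k=s, kq=1 ⇒ qs=1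
    right
    rw [add_zero] at h1' hq'
    rw [h1'] at hq'
    linear_combination hq'
  · -- ℓ=0, k=s, kq=s ⇒ s*q = s*1 ⇒ q=1
    exfalso
    rw [add_zero] at h1' hq'
    rw [h1'] at hq'
    exact hq1' (hsu.mul_left_cancel (by linear_combination hq'))
  · -- ℓ=s+1, k+s+1=1 ⇒ k=-s; kq+s+1=1 ⇒ kq=-s=k ⇒ q=1
    exfalso
    have hk1 : (k:ZMod p) = -(s:ZMod p) := by linear_combination h1'
    have hk2 : (k:ZMod p) * q = -(s:ZMod p) := by linear_combination hq'
    exact hq1' (hku.mul_left_cancel (by rw [hk2, mul_one, hk1]))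
  · -- ℓ=s+1, k=-s, kq = -1 ⇒ -sq=-1 ⇒ qs=1
    right
    have hk1 : (k:ZMod p) = -(s:ZMod p) := by linear_combination h1'
    have hk2 : (k:ZMod p) * q = -1 := by linear_combination hq'
    rw [hk1] at hk2
    linear_combination -hk2
  · -- ℓ=s+1, k=-1, kq=-s ⇒ q=s
    left
    have hk1 : (k:ZMod p) = -1 := by linear_combination h1'
    have hk2 : (k:ZMod p) * q = -(s:ZMod p) := by linear_combination hq'
    rw [hk1] at hk2
    linear_combination hk2
  · -- ℓ=s+1, k=-1, kq=-1 ⇒ q=1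
    exfalso
    have hk1 : (k:ZMod p) = -1 := by linear_combination h1'
    have hk2 : (k:ZMod p) * q = -1 := by linear_combination hq'
    rw [hk1] at hk2
    exact hq1' (by linear_combination -hk2)
end
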